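/- Let n ≥ 1 and let W_n be the n-uplinked mutual dyad. Then the reduced path homology of W_n over any field vanishes in every dimension p ≥ 0 with p ≠ 2; that is, β̃_0(W_n) = β̃_1(W_n) = 0 and β̃_p(W_n) = 0 for all p ≥ 3. -/

import Mathlib

open Finset

/-- The non-regular boundary operator `∂_[p] : R^{V^{p+1}} → R^{V^p}`.
It is the linear map acting on the standard basis by
`∂_[p] e_{(v_0,…,v_p)} = ∑_{j=0}^p (−1)^j e_{(v_0,…,v̂_j,…,v_p)}`,
where `v̂_j` means that the entry `v_j` is omitted from the tuple
(here `fun i => x (j.succAbove i)` is the tuple `x` with its `j`-th entry dropped). -/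
noncomputable def pathBoundary (R V : Type) [CommRing R] [Fintype V] [DecidableEq V]
    (p : ℕ) : ((Fin (p + 1) → V) → R) →ₗ[R] ((Fin p → V) → R) where
  toFun f := fun w => ∑ x : Fin (p + 1) → V,
    (∑ j : Fin (p + 1), (-1 : R) ^ (j : ℕ) *
      (if (fun i => x (j.succAbove i)) = w then 1 else 0)) * f x
  map_add' f g := by
    funext w
    simp [mul_add, Finset.sum_add_distrib]
  map_smul' r f := by
    funext w
    simp [Finset.mul_sum, mul_left_comm]

/-- A tuple of vertices is an allowed path when each consecutive pair is an arc. -/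
def IsAllowed {V : Type} (A : V → V → Prop) {q : ℕ} (x : Fin q → V) : Prop :=
  ∀ (i : ℕ) (h : i + 1 < q), A (x ⟨i, Nat.lt_of_succ_lt h⟩) (x ⟨i + 1, h⟩)

/-- `R^{𝒜}`: the subspace of `R^{V^q}` of functions supported on allowed paths
(`q` is the number of vertices in the tuple, so this is `R^{𝒜_{q-1}}`). -/
def allowedSubmodule (R V : Type) [CommRing R] (A : V → V → Prop) (q : ℕ) :
    Submodule R ((Fin q → V) → R) where
  carrier := {f | ∀ x, ¬ IsAllowed A x → f x = 0}
  add_mem' := fun hf hg x hx => by simp only [Pi.add_apply, hf x hx, hg x hx, add_zero]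
  zero_mem' := fun x hx => rfl
  smul_mem' := fun c f hf x hx => by simp only [Pi.smul_apply, hf x hx, smul_zero]

/-- `Ω_p`, the space of invariant `p`-paths:
`Ω_p = {ω ∈ R^{𝒜_p} : ∂_[p] ω ∈ R^{𝒜_{p−1}}}`. -/
noncomputable def invariantPaths (R V : Type) [CommRing R] [Fintype V] [DecidableEq V]
    (A : V → V → Prop) (p : ℕ) : Submodule R ((Fin (p + 1) → V) → R) :=
  allowedSubmodule R V A (p + 1) ⊓ (allowedSubmodule R V A p).comap (pathBoundary R V p)

/-- The cycles `Z_p = ker ∂_p` of the path complex `(Ω_p, ∂_p)`, `∂_p = ∂_[p]|_{Ω_p}`.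
In degree `0` the complex ends at `Ω_0` (the differential out of `Ω_0` is zero),
so `Z_0 = Ω_0`. -/
noncomputable def pathCycles (R V : Type) [CommRing R] [Fintype V] [DecidableEq V]
    (A : V → V → Prop) : (p : ℕ) → Submodule R ((Fin (p + 1) → V) → R)
  | 0 => invariantPaths R V A 0
  | p + 1 => invariantPaths R V A (p + 1) ⊓ LinearMap.ker (pathBoundary R V (p + 1))

/-- The boundaries `B_p = im ∂_{p+1} = ∂_[p+1](Ω_{p+1})`. -/
noncomputable def pathBoundaries (R V : Type) [CommRing R] [Fintype V] [DecidableEq V]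
    (A : V → V → Prop) (p : ℕ) : Submodule R ((Fin (p + 1) → V) → R) :=
  Submodule.map (pathBoundary R V (p + 1)) (invariantPaths R V A (p + 1))

/-- The path homology `H_p = Z_p / B_p` of the digraph `(V, A)` with coefficients in `R`. -/
abbrev pathHomology (R V : Type) [CommRing R] [Fintype V] [DecidableEq V]
    (A : V → V → Prop) (p : ℕ) : Type :=
  pathCycles R V A p ⧸ (pathBoundaries R V A p).comap (pathCycles R V A p).subtype

/-- The Betti numbers `β_p = dim H_p`. -/
noncomputable def betti (F V : Type) [Field F] [Fintype V] [DecidableEq V]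
    (A : V → V → Prop) (p : ℕ) : ℕ :=
  Module.finrank F (pathHomology F V A p)

/-- The reduced Betti numbers `β̃_p = β_p − δ_{p0}` (as integers). -/
noncomputable def tildeBetti (F V : Type) [Field F] [Fintype V] [DecidableEq V]
    (A : V → V → Prop) (p : ℕ) : ℤ :=
  (betti F V A p : ℤ) - (if p = 0 then 1 else 0)

/-- For `n ≥ 1`, the `n`-uplinked mutual dyad `W_n` has vertex set `{a, b, 1, …, n}`
(realized as `Fin 2 ⊕ Fin n`, with `a = Sum.inl 0` and `b = Sum.inl 1`) and arc set
`{(a,b), (b,a)} ∪ {(a,i) : 1 ≤ i ≤ n} ∪ {(b,i) : 1 ≤ i ≤ n}`. -/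
def uplinkArc (n : ℕ) : (Fin 2 ⊕ Fin n) → (Fin 2 ⊕ Fin n) → Prop
  | Sum.inl i, Sum.inl j => i ≠ j
  | Sum.inl _, Sum.inr _ => True
  | Sum.inr _, _ => False

/-- The `n`-downlinked mutual dyad: the `n`-uplinked mutual dyad with all arcs reversed. -/
def downlinkArc (n : ℕ) (u v : Fin 2 ⊕ Fin n) : Prop := uplinkArc n v u

/-!
Since `a` has an arc to every other vertex, every `0`-chain with coefficient sum zero is a
boundary, so `β_0 = 1`.

A `1`-cycle `ω` of `W_n` is determined by `c = ω(a,b)` and `α_i = ω(a,i)`: the cycle condition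
at `i` and at `a` forces `ω(b,i) = -α_i` and `ω(b,a) = c + Σ α_i`. It is the boundary of the
invariant `2`-chain `c·(a b i₀ + b a i₀) + Σ α_i·(b a i)`, so `β_1 = 0`.

An allowed path with at least four vertices starts `s t s` with `{s, t} = {a, b}`. Deleting its
second vertex gives the non-allowed face `(s, s, …)`, which arises from no other allowed path and
no other deletion; so every invariant `p`-path vanishes for `p ≥ 3` and `β_p = 0`.
-/

theorem sum_fun_fin_two {V M : Type} [Fintype V] [AddCommMonoid M] (f : (Fin 2 → V) → M) :
    ∑ x, f x = ∑ u, ∑ v, f ![u, v] := by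
  rw [← Fintype.sum_prod_type']
  exact Fintype.sum_equiv (piFinTwoEquiv fun _ => V) _ _ fun x =>
    congrArg f (by ext i; fin_cases i <;> rfl)

section PathComplex

variable {R V : Type} [CommRing R] {A : V → V → Prop}

theorem isAllowed_iff {q : ℕ} {x : Fin (q + 1) → V} :
    IsAllowed A x ↔ ∀ i : Fin q, A (x i.castSucc) (x i.succ) :=
  ⟨fun hx i => hx i (by omega), fun hx i hi => hx ⟨i, by omega⟩⟩

theorem isAllowed_of_lt_two {q : ℕ} (hq : q < 2) (x : Fin q → V) : IsAllowed A x :=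
  fun _ hi => absurd hi (by omega)

theorem isAllowed_pair {u v : V} : IsAllowed A ![u, v] ↔ A u v := by
  simp [isAllowed_iff, Fin.forall_fin_one]

theorem isAllowed_triple {u v w : V} : IsAllowed A ![u, v, w] ↔ A u v ∧ A v w := by
  simp [isAllowed_iff, Fin.forall_fin_two]

theorem allowedSubmodule_eq_top {q : ℕ} (hq : q < 2) : allowedSubmodule R V A q = ⊤ :=
  eq_top_iff.2 fun _ _ x hx => absurd (isAllowed_of_lt_two hq x) hx

theorem eq_of_mem_allowedSubmodule {q : ℕ} {f g : (Fin q → V) → R}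
    (hf : f ∈ allowedSubmodule R V A q) (hg : g ∈ allowedSubmodule R V A q)
    (h : ∀ x, IsAllowed A x → f x = g x) : f = g := by
  funext x
  by_cases hx : IsAllowed A x
  · exact h x hx
  · rw [hf x hx, hg x hx]

variable [DecidableEq V]

theorem single_mem_allowedSubmodule {q : ℕ} {x : Fin q → V} (hx : IsAllowed A x) (c : R) :
    Pi.single x c ∈ allowedSubmodule R V A q :=
  fun y hy => by simp [show y ≠ x by rintro rfl; exact hy hx]

variable [Fintype V]

theorem invariantPaths_zero : invariantPaths R V A 0 = ⊤ := by
  simp [invariantPaths, allowedSubmodule_eq_top]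

theorem pathCycles_zero : pathCycles R V A 0 = ⊤ :=
  invariantPaths_zero

theorem invariantPaths_one : invariantPaths R V A 1 = allowedSubmodule R V A 2 := by
  simp [invariantPaths, allowedSubmodule_eq_top]

theorem pathCycles_le_invariantPaths (p : ℕ) : pathCycles R V A p ≤ invariantPaths R V A p := by
  cases p
  · exact le_rfl
  · exact inf_le_left

theorem pathBoundary_apply (p : ℕ) (f : (Fin (p + 1) → V) → R) (w : Fin p → V) :
    pathBoundary R V p f w = ∑ x, (∑ j : Fin (p + 1),
      (-1 : R) ^ (j : ℕ) * if Fin.removeNth j x = w then 1 else 0) * f x :=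
  rfl

theorem pathBoundary_single {p : ℕ} (x : Fin (p + 1) → V) (c : R) :
    pathBoundary R V p (Pi.single x c) =
      ∑ j : Fin (p + 1), (-1 : R) ^ (j : ℕ) • Pi.single (Fin.removeNth j x) c := by
  funext w
  rw [pathBoundary_apply, Finset.sum_eq_single x (fun y _ hy => by simp [hy]) (by simp)]
  simp [Pi.single_apply, Finset.sum_mul, eq_comm]

theorem pathBoundary_single_of_two (x : Fin 2 → V) (c : R) :
    pathBoundary R V 1 (Pi.single x c) = Pi.single ![x 1] c - Pi.single ![x 0] c := by
  have h0 : Fin.removeNth 0 x = ![x 1] := by ext i; fin_cases i; rfl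
  have h1 : Fin.removeNth 1 x = ![x 0] := by ext i; fin_cases i; rfl
  simp [pathBoundary_single, Fin.sum_univ_two, h0, h1, sub_eq_add_neg]

theorem pathBoundary_single_of_three (u v w : V) (c : R) :
    pathBoundary R V 2 (Pi.single ![u, v, w] c) =
      Pi.single ![v, w] c - Pi.single ![u, w] c + Pi.single ![u, v] c := by
  have h1 : Fin.removeNth 1 ![u, v, w] = ![u, w] := by ext i; fin_cases i <;> rfl
  have h2 : Fin.removeNth 2 ![u, v, w] = ![u, v] := by ext i; fin_cases i <;> rfl
  simp [pathBoundary_single, Fin.sum_univ_three, h1, h2, sub_eq_add_neg]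

theorem single_mem_invariantPaths_two {u v w : V} (huv : A u v) (hvw : A v w) (huw : A u w)
    (c : R) : Pi.single ![u, v, w] c ∈ invariantPaths R V A 2 := by
  refine ⟨single_mem_allowedSubmodule (isAllowed_triple.2 ⟨huv, hvw⟩) c, ?_⟩
  change pathBoundary R V 2 (Pi.single ![u, v, w] c) ∈ allowedSubmodule R V A 2
  rw [pathBoundary_single_of_three]
  exact add_mem (sub_mem (single_mem_allowedSubmodule (isAllowed_pair.2 hvw) c)
    (single_mem_allowedSubmodule (isAllowed_pair.2 huw) c))
    (single_mem_allowedSubmodule (isAllowed_pair.2 huv) c)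

theorem pathBoundary_one_apply (ω : (Fin 2 → V) → R) (v : V) :
    pathBoundary R V 1 ω ![v] = ∑ u, ω ![u, v] - ∑ u, ω ![v, u] := by
  have h1 (u w : V) : Fin.removeNth 1 ![u, w] = ![u] := by ext i; fin_cases i; rfl
  simp [pathBoundary_apply, sum_fun_fin_two, Fin.sum_univ_two, h1, add_mul, ite_mul,
    Finset.sum_add_distrib, sub_eq_add_neg]

/-- Only the pair `(x, j)` contributes to `∂ω` at the face `Fin.removeNth j x`, and that
coefficient must vanish because the face is not allowed. -/
theorem apply_eq_zero_of_unique_face {p : ℕ} {ω : (Fin (p + 1) → V) → R}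
    (hω : ω ∈ invariantPaths R V A p) {x : Fin (p + 1) → V} (hx : IsAllowed A x)
    {j : Fin (p + 1)} (hface : ¬ IsAllowed A (Fin.removeNth j x))
    (huniq : ∀ y k, IsAllowed A y → Fin.removeNth k y = Fin.removeNth j x → y = x ∧ k = j) :
    ω x = 0 := by
  have h := hω.2 _ hface
  rw [pathBoundary_apply, Finset.sum_eq_single x, Finset.sum_eq_single j] at h
  · simpa using h
  · intro k _ hk
    simp [show Fin.removeNth k x ≠ Fin.removeNth j x from fun h => hk (huniq x k hx h).2]
  · simp
  · intro y _ hy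
    by_cases hyA : IsAllowed A y
    · simp [show ∀ k, Fin.removeNth k y ≠ Fin.removeNth j x from
        fun k h => hy (huniq y k hyA h).1]
    · simp [hω.1 y hyA]
  · simp

end PathComplex

section Augmentation

variable (R V : Type) [CommRing R] [Fintype V]

noncomputable def augmentation : ((Fin 1 → V) → R) →ₗ[R] R :=
  ∑ w, LinearMap.proj w

variable {R V}

@[simp]
theorem augmentation_apply (g : (Fin 1 → V) → R) : augmentation R V g = ∑ w, g w := by
  simp [augmentation]

variable [DecidableEq V]

theorem augmentation_comp_pathBoundary_one :
    augmentation R V ∘ₗ pathBoundary R V 1 = 0 :=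
  LinearMap.pi_ext fun x c => by simp [pathBoundary_single_of_two]

theorem pathBoundaries_zero_eq_ker_augmentation {A : V → V → Prop} (r : V)
    (hr : ∀ v, v ≠ r → A r v) :
    pathBoundaries R V A 0 = LinearMap.ker (augmentation R V) := by
  refine le_antisymm ?_ fun g hg => ?_
  · rintro _ ⟨η, -, rfl⟩
    exact LinearMap.congr_fun augmentation_comp_pathBoundary_one η
  have hmem (w : Fin 1 → V) (c : R) :
      Pi.single w c - c • Pi.single ![r] 1 ∈ pathBoundaries R V A 0 := by
    obtain ⟨v, rfl⟩ : ∃ v, w = ![v] := ⟨w 0, by ext i; fin_cases i; rfl⟩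
    by_cases hv : v = r
    · simp [hv, ← Pi.single_smul']
    refine ⟨Pi.single ![r, v] c, ?_, by simp [pathBoundary_single_of_two, ← Pi.single_smul']⟩
    rw [invariantPaths_one]
    exact single_mem_allowedSubmodule (isAllowed_pair.2 (hr v hv)) c
  have hg' : ∑ w, g w = 0 := by simpa using hg
  have hdecomp : g = ∑ w, (Pi.single w (g w) - g w • Pi.single ![r] 1) := by
    rw [Finset.sum_sub_distrib, Finset.univ_sum_single, ← Finset.sum_smul, hg', zero_smul,
      sub_zero]
  rw [hdecomp]
  exact Submodule.sum_mem _ fun w _ => hmem w (g w)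

end Augmentation

section Betti

variable {F V : Type} [Field F] [Fintype V] [DecidableEq V] {A : V → V → Prop}

theorem betti_eq_zero_of_pathCycles_le {p : ℕ}
    (h : pathCycles F V A p ≤ pathBoundaries F V A p) : betti F V A p = 0 := by
  have : Subsingleton (pathHomology F V A p) := by
    rw [pathHomology, Submodule.comap_subtype_eq_top.2 h]
    infer_instance
  exact Module.finrank_zero_of_subsingleton

theorem betti_eq_zero_of_invariantPaths_eq_bot {p : ℕ} (h : invariantPaths F V A p = ⊥) :
    betti F V A p = 0 :=
  betti_eq_zero_of_pathCycles_le ((pathCycles_le_invariantPaths p).trans (h ▸ bot_le))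

theorem betti_zero_eq_one_of_forall_arc (r : V) (hr : ∀ v, v ≠ r → A r v) :
    betti F V A 0 = 1 := by
  set f := augmentation F V ∘ₗ (pathCycles F V A 0).subtype
  have hker : LinearMap.ker f = (pathBoundaries F V A 0).comap (pathCycles F V A 0).subtype := by
    rw [LinearMap.ker_comp, pathBoundaries_zero_eq_ker_augmentation r hr]
  have hsurj : Function.Surjective f := fun c =>
    ⟨⟨Pi.single ![r] c, by simp [pathCycles_zero]⟩, by simp [f]⟩
  exact ((Submodule.quotEquivOfEq _ _ hker.symm).trans
    (f.quotKerEquivOfSurjective hsurj)).finrank_eq.trans (Module.finrank_self F)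

end Betti

namespace uplinkArc

variable {n : ℕ}

theorem irrefl (u : Fin 2 ⊕ Fin n) : ¬ uplinkArc n u u := by
  rcases u with s | i <;> simp [uplinkArc]

theorem inl_zero_arc_of_ne (v : Fin 2 ⊕ Fin n) (hv : v ≠ Sum.inl 0) :
    uplinkArc n (Sum.inl 0) v := by
  rcases v with s | i
  · exact fun h => hv (congrArg Sum.inl h.symm)
  · trivial

theorem eq_of_arc_arc_arc {u v w z : Fin 2 ⊕ Fin n} (huv : uplinkArc n u v)
    (hvw : uplinkArc n v w) (hwz : uplinkArc n w z) : u = w := by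
  rcases u with s | i <;> rcases v with t | j <;> rcases w with r | k <;>
    rcases z with q | l <;> simp_all [uplinkArc] <;> omega

theorem eq_of_arc_of_arc {u u' w z : Fin 2 ⊕ Fin n} (hu : uplinkArc n u w)
    (hu' : uplinkArc n u' w) (hw : uplinkArc n w z) : u = u' := by
  rcases u with s | i <;> rcases u' with t | j <;> rcases w with r | k <;>
    rcases z with q | l <;> simp_all [uplinkArc] <;> omega

section LongPaths

variable {m : ℕ}

theorem apply_zero_eq_apply_two {x : Fin (m + 4) → Fin 2 ⊕ Fin n}
    (hx : IsAllowed (uplinkArc n) x) : x 0 = x 2 :=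
  eq_of_arc_arc_arc (hx 0 (by omega)) (hx 1 (by omega)) (hx 2 (by omega))

theorem not_isAllowed_removeNth_one {x : Fin (m + 4) → Fin 2 ⊕ Fin n}
    (hx : IsAllowed (uplinkArc n) x) : ¬ IsAllowed (uplinkArc n) (Fin.removeNth 1 x) := by
  intro h
  have h02 : uplinkArc n (x 0) (x 2) := h 0 (by omega)
  rw [apply_zero_eq_apply_two hx] at h02
  exact irrefl _ h02

theorem eq_of_removeNth_eq_removeNth_one {x y : Fin (m + 4) → Fin 2 ⊕ Fin n}
    (hx : IsAllowed (uplinkArc n) x) (hy : IsAllowed (uplinkArc n) y) {k : Fin (m + 4)}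
    (h : Fin.removeNth k y = Fin.removeNth 1 x) : y = x ∧ k = 1 := by
  have h0 : Fin.removeNth 1 x 0 = x 2 := apply_zero_eq_apply_two hx
  have h1 : Fin.removeNth 1 x 1 = x 2 := rfl
  rcases Fin.eq_zero_or_eq_succ k with rfl | ⟨k, rfl⟩
  · have h12 : uplinkArc n (y 1) (y 2) := hy 1 (by omega)
    rw [show y 1 = x 2 from (congrFun h 0).trans h0, show y 2 = x 2 from congrFun h 1] at h12
    exact (irrefl _ h12).elim
  rcases Fin.eq_zero_or_eq_succ k with rfl | ⟨k, rfl⟩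
  · rw [Fin.succ_zero_eq_one] at h ⊢
    have h2 : y 2 = x 2 := congrFun h 1
    have hy12 : uplinkArc n (y 1) (x 2) := h2 ▸ hy 1 (by omega)
    have h11 : y 1 = x 1 := eq_of_arc_of_arc hy12 (hx 1 (by omega)) (hx 2 (by omega))
    refine ⟨?_, rfl⟩
    rw [← Fin.insertNth_self_removeNth 1 y, ← Fin.insertNth_self_removeNth 1 x, h, h11]
  · have h01 : uplinkArc n (y 0) (y 1) := hy 0 (by omega)
    rw [show y 0 = x 2 by simpa [Fin.removeNth_apply] using (congrFun h 0).trans h0,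
      show y 1 = x 2 by simpa [Fin.removeNth_apply] using (congrFun h 1).trans h1] at h01
    exact (irrefl _ h01).elim

end LongPaths

variable {R : Type} [CommRing R]

theorem invariantPaths_eq_bot (m : ℕ) :
    invariantPaths R (Fin 2 ⊕ Fin n) (uplinkArc n) (m + 3) = ⊥ := by
  refine (Submodule.eq_bot_iff _).2 fun ω hω => funext fun x => ?_
  by_cases hx : IsAllowed (uplinkArc n) x
  · exact apply_eq_zero_of_unique_face hω hx (not_isAllowed_removeNth_one hx)
      fun y _ hy h => eq_of_removeNth_eq_removeNth_one hx hy h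
  · exact hω.1 x hx

theorem pathCycles_one_le_pathBoundaries (hn : 1 ≤ n) :
    pathCycles R (Fin 2 ⊕ Fin n) (uplinkArc n) 1 ≤
      pathBoundaries R (Fin 2 ⊕ Fin n) (uplinkArc n) 1 := by
  rintro ω ⟨⟨hω, -⟩, hcyc : pathBoundary R _ 1 ω = 0⟩
  have hflow (v : Fin 2 ⊕ Fin n) : ∑ u, ω ![u, v] = ∑ u, ω ![v, u] := by
    rw [← sub_eq_zero, ← pathBoundary_one_apply, hcyc]
    rfl
  have hout (i : Fin n) (v : Fin 2 ⊕ Fin n) : ω ![Sum.inr i, v] = 0 :=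
    hω _ (mt isAllowed_pair.1 (by cases v <;> exact id))
  set α : Fin n → R := fun i => ω ![Sum.inl 0, Sum.inr i]
  set c := ω ![Sum.inl 0, Sum.inl 1]
  have hleaf (i : Fin n) : ω ![Sum.inl 1, Sum.inr i] = -α i := by
    have := hflow (Sum.inr i)
    simp only [Fintype.sum_sum_type, Fin.sum_univ_two, hout, sum_const_zero, add_zero] at this
    linear_combination this
  have hba : ω ![Sum.inl 1, Sum.inl 0] = c + ∑ i, α i := by
    have := hflow (Sum.inl 0)
    simp only [Fintype.sum_sum_type, Fin.sum_univ_two, hout, sum_const_zero, add_zero] at this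
    linear_combination this
  let i₀ : Fin n := ⟨0, hn⟩
  set η : (Fin 3 → Fin 2 ⊕ Fin n) → R := Pi.single ![Sum.inl 0, Sum.inl 1, Sum.inr i₀] c +
    Pi.single ![Sum.inl 1, Sum.inl 0, Sum.inr i₀] c +
    ∑ i, Pi.single ![Sum.inl 1, Sum.inl 0, Sum.inr i] (α i)
  have hη : η ∈ invariantPaths R _ (uplinkArc n) 2 := by
    refine add_mem (add_mem ?_ ?_) (sum_mem fun i _ => ?_) <;>
      exact single_mem_invariantPaths_two (by simp [uplinkArc]) trivial trivial _
  have hbη : pathBoundary R _ 2 η = Pi.single ![Sum.inl 0, Sum.inl 1] c +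
      Pi.single ![Sum.inl 1, Sum.inl 0] c + ∑ i, (Pi.single ![Sum.inl 0, Sum.inr i] (α i) -
        Pi.single ![Sum.inl 1, Sum.inr i] (α i) + Pi.single ![Sum.inl 1, Sum.inl 0] (α i)) := by
    simp only [η, map_add, map_sum, pathBoundary_single_of_three]
    abel
  refine ⟨η, hη, eq_of_mem_allowedSubmodule hη.2 hω fun x hx => ?_⟩
  obtain ⟨u, v, rfl⟩ : ∃ u v, x = ![u, v] := ⟨x 0, x 1, by ext i; fin_cases i <;> rfl⟩
  rw [isAllowed_pair] at hx
  rw [hbη]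
  rcases u with s | i <;> rcases v with t | j
  · fin_cases s <;> fin_cases t <;> simp [uplinkArc, c, hba] at hx ⊢
  · fin_cases s <;> simp [Pi.single_apply, α, hleaf]
  all_goals exact hx.elim

end uplinkArc

/-- For `n ≥ 1` and `W_n` the `n`-uplinked mutual dyad, the reduced path
homology of `W_n` over any field vanishes in every dimension `p ≥ 0` with `p ≠ 2`:
`β̃_0(W_n) = β̃_1(W_n) = 0` and `β̃_p(W_n) = 0` for all `p ≥ 3`. -/
theorem uplinked_dyad_tildeBetti_ne_two (F : Type) [Field F] (n : ℕ) (hn : 1 ≤ n) :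
    tildeBetti F (Fin 2 ⊕ Fin n) (uplinkArc n) 0 = 0
    ∧ tildeBetti F (Fin 2 ⊕ Fin n) (uplinkArc n) 1 = 0
    ∧ ∀ p : ℕ, 3 ≤ p → tildeBetti F (Fin 2 ⊕ Fin n) (uplinkArc n) p = 0 := by
  refine ⟨?_, ?_, fun p hp => ?_⟩
  · simp [tildeBetti, betti_zero_eq_one_of_forall_arc (Sum.inl 0) uplinkArc.inl_zero_arc_of_ne]
  · simp [tildeBetti,
      betti_eq_zero_of_pathCycles_le (uplinkArc.pathCycles_one_le_pathBoundaries hn)]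
  · obtain ⟨m, rfl⟩ := Nat.exists_eq_add_of_le' hp
    simp [tildeBetti, betti_eq_zero_of_invariantPaths_eq_bot (uplinkArc.invariantPaths_eq_bot m)]
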